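/- arXiv:1604.05054 — 6 statements merged into one kernel-verified Lean document; each statement's English description precedes it below -/
import Mathlib

section
/- Let n ≥ p ≥ 1 and let U, Q ∈ ℝ^{n×p} satisfy UᵀU = I_p, QᵀQ = I_p and UᵀQ = 0. Let A ∈ ℝ^{p×p} be skew-symmetric and B ∈ ℝ^{p×p} arbitrary, and write the matrix exponential in p×p blocks as exp_m([[A, −Bᵀ],[B, 0]]) = [[M, X],[N, Y]]. Set Ũ := UM + QN. Then for every orthogonal matrix Ψ ∈ ℝ^{p×p}, putting R_E := ΨB and Q_E := QΨᵀ, and letting M' and N_E denote the top-left and bottom-left p×p blocks of exp_m([[A, −R_Eᵀ],[R_E, 0]]), one has U M' + Q_E N_E = Ũ. (In other words, the Edelman–Arias–Smith Stiefel exponential formula applied to Δ = UA + QB, with any factorization Q_E R_E = QB of this form, reproduces Ũ, so Δ is the Riemannian logarithm of Ũ at U.) -/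
/-! Conjugating the generator `[[A, -Bᵀ], [B, 0]]` by the orthogonal matrix `diag(1, Ψ)` turns it
into `[[A, -(ΨB)ᵀ], [ΨB, 0]]`, and the matrix exponential commutes with conjugation. Hence the
blocks of the new exponential are `M' = M` and `N_E = ΨN`, so that
`U M' + Q_E N_E = U M + Q Ψᵀ Ψ N = U M + Q N`. -/

open Matrix

/-- Spectral norm (largest singular value) of a real matrix: the operator norm of the
induced linear map between Euclidean spaces. -/
noncomputable def sNorm {m n : Type*} [Fintype m] [Fintype n] [DecidableEq n]
    (A : Matrix m n ℝ) : ℝ :=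
  ‖(Matrix.toEuclideanLin A).toContinuousLinearMap‖

namespace Matrix

section Blocks

variable {m n R : Type*} [Fintype m] [Fintype n] [DecidableEq m]

theorem fromBlocks_one_zero_zero_mul_mul [Semiring R] (Ψ Ψ' : Matrix n n R)
    (M : Matrix m m R) (X : Matrix m n R) (N : Matrix n m R) (Y : Matrix n n R) :
    fromBlocks 1 0 0 Ψ * fromBlocks M X N Y * fromBlocks 1 0 0 Ψ' =
      fromBlocks M (X * Ψ') (Ψ * N) (Ψ * Y * Ψ') := by
  simp [fromBlocks_multiply]

theorem fromBlocks_one_zero_zero_conj_fromBlocks_neg_transpose [CommRing R] (Ψ : Matrix n n R)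
    (A : Matrix m m R) (B : Matrix n m R) :
    fromBlocks 1 0 0 Ψ * fromBlocks A (-Bᵀ) B 0 * fromBlocks 1 0 0 Ψᵀ =
      fromBlocks A (-(Ψ * B)ᵀ) (Ψ * B) 0 := by
  rw [fromBlocks_one_zero_zero_mul_mul, transpose_mul, Matrix.neg_mul, Matrix.mul_zero,
    Matrix.zero_mul]

end Blocks

section Exp

variable {m n 𝔸 : Type*} [Fintype m] [Fintype n] [DecidableEq m] [DecidableEq n]
  [NormedCommRing 𝔸] [NormedAlgebra ℚ 𝔸] [CompleteSpace 𝔸]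

theorem exp_fromBlocks_neg_transpose_mul_left {Ψ : Matrix n n 𝔸} (hΨ : Ψ * Ψᵀ = 1)
    {A : Matrix m m 𝔸} {B : Matrix n m 𝔸} {M : Matrix m m 𝔸} {X : Matrix m n 𝔸}
    {N : Matrix n m 𝔸} {Y : Matrix n n 𝔸}
    (hexp : NormedSpace.exp (fromBlocks A (-Bᵀ) B 0) = fromBlocks M X N Y) :
    NormedSpace.exp (fromBlocks A (-(Ψ * B)ᵀ) (Ψ * B) 0) =
      fromBlocks M (X * Ψᵀ) (Ψ * N) (Ψ * Y * Ψᵀ) := by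
  have hΨ' : Ψᵀ * Ψ = 1 := mul_eq_one_comm.mp hΨ
  let P : (Matrix (m ⊕ n) (m ⊕ n) 𝔸)ˣ :=
    ⟨fromBlocks 1 0 0 Ψ, fromBlocks 1 0 0 Ψᵀ, by simp [fromBlocks_multiply, hΨ],
      by simp [fromBlocks_multiply, hΨ']⟩
  have := exp_units_conj P (fromBlocks A (-Bᵀ) B 0)
  rwa [show (P : Matrix (m ⊕ n) (m ⊕ n) 𝔸) = fromBlocks 1 0 0 Ψ from rfl,
    show Units.val P⁻¹ = fromBlocks 1 0 0 Ψᵀ from rfl, fromBlocks_one_zero_zero_conj_fromBlocks_neg_transpose, hexp,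
    fromBlocks_one_zero_zero_mul_mul] at this

end Exp

end Matrix

theorem stmt_0_general (n p : ℕ)
    (U Q : Matrix (Fin n) (Fin p) ℝ)
    (A B : Matrix (Fin p) (Fin p) ℝ)
    (M X N Y : Matrix (Fin p) (Fin p) ℝ)
    (hexp : NormedSpace.exp (Matrix.fromBlocks A (-Bᵀ) B 0) = Matrix.fromBlocks M X N Y)
    (Utilde : Matrix (Fin n) (Fin p) ℝ) (hUtilde : Utilde = U * M + Q * N)
    (Ψ : Matrix (Fin p) (Fin p) ℝ) (hΨ : Ψᵀ * Ψ = 1 ∧ Ψ * Ψᵀ = 1)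
    (RE : Matrix (Fin p) (Fin p) ℝ) (hRE : RE = Ψ * B)
    (QE : Matrix (Fin n) (Fin p) ℝ) (hQE : QE = Q * Ψᵀ)
    (M' X' NE Y' : Matrix (Fin p) (Fin p) ℝ)
    (hexp' : NormedSpace.exp (Matrix.fromBlocks A (-REᵀ) RE 0) =
      Matrix.fromBlocks M' X' NE Y') :
    U * M' + QE * NE = Utilde := by
  subst hRE hQE hUtilde
  obtain ⟨rfl, -, rfl, -⟩ :=
    fromBlocks_inj.mp (hexp'.symm.trans (exp_fromBlocks_neg_transpose_mul_left hΨ.2 hexp))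
  rw [Matrix.mul_assoc Q, ← Matrix.mul_assoc Ψᵀ, hΨ.1, Matrix.one_mul]

/-- the Edelman–Arias–Smith Stiefel exponential formula applied to
`Δ = UA + QB`, with any factorization `Q_E R_E = QB` with `R_E = ΨB`, `Q_E = QΨᵀ`
for orthogonal `Ψ`, reproduces `Ũ = UM + QN`. -/
theorem stmt_0 (n p : ℕ) (hp : 1 ≤ p) (hnp : p ≤ n)
    (U Q : Matrix (Fin n) (Fin p) ℝ)
    (hU : Uᵀ * U = 1) (hQ : Qᵀ * Q = 1) (hUQ : Uᵀ * Q = 0)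
    (A B : Matrix (Fin p) (Fin p) ℝ) (hA : Aᵀ = -A)
    (M X N Y : Matrix (Fin p) (Fin p) ℝ)
    (hexp : NormedSpace.exp (Matrix.fromBlocks A (-Bᵀ) B 0) = Matrix.fromBlocks M X N Y)
    (Utilde : Matrix (Fin n) (Fin p) ℝ) (hUtilde : Utilde = U * M + Q * N)
    (Ψ : Matrix (Fin p) (Fin p) ℝ) (hΨ : Ψᵀ * Ψ = 1 ∧ Ψ * Ψᵀ = 1)
    (RE : Matrix (Fin p) (Fin p) ℝ) (hRE : RE = Ψ * B)
    (QE : Matrix (Fin n) (Fin p) ℝ) (hQE : QE = Q * Ψᵀ)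
    (M' X' NE Y' : Matrix (Fin p) (Fin p) ℝ)
    (hexp' : NormedSpace.exp (Matrix.fromBlocks A (-REᵀ) RE 0) =
      Matrix.fromBlocks M' X' NE Y') :
    U * M' + QE * NE = Utilde :=
  stmt_0_general n p U Q A B M X N Y hexp Utilde hUtilde Ψ hΨ RE hRE QE hQE M' X' NE Y' hexp'
end

section
/- Let C ∈ ℝ^{p×p} be skew-symmetric with 0 < ‖C‖₂ < π. Then ‖exp_m(C) − I‖₂ < ‖C‖₂. -/
/-!
For skew-adjoint `L` every `exp (t • L)` is orthogonal, so the mean value inequality applied to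
`t ↦ exp (t • L) x` gives `‖(exp L - 1) x‖ ≤ ‖L x‖ ≤ ‖L‖ ‖x‖`. If the second inequality is an
equality, `x` is an eigenvector of `L* L = -L²` for `a² = ‖L‖²`, so `x, L x` span a plane on which
`exp L` is rotation by the angle `a`, and `‖(exp L - 1) x‖² = 2 (1 - cos a) ‖x‖² < a² ‖x‖²`.
Thus `‖(exp L - 1) x‖ < ‖L‖ ‖x‖` for every `x ≠ 0`, and compactness of the unit sphere turns this
into `‖exp L - 1‖ < ‖L‖`.
-/

open Matrix

open NormedSpace ContinuousLinearMap
open scoped RealInnerProductSpace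

theorem ContinuousLinearMap.opNorm_lt_of_forall_norm_apply_lt {𝕜 E F : Type*} [RCLike 𝕜]
    [NormedAddCommGroup E] [NormedSpace 𝕜 E] [FiniteDimensional 𝕜 E]
    [NormedAddCommGroup F] [NormedSpace 𝕜 F] (T : E →L[𝕜] F) {c : ℝ} (hc : 0 < c)
    (h : ∀ x, x ≠ 0 → ‖T x‖ < c * ‖x‖) : ‖T‖ < c := by
  have : ProperSpace E := FiniteDimensional.proper_rclike 𝕜 E
  obtain ⟨M, hM0, hMc, hM⟩ : ∃ M, 0 ≤ M ∧ M < c ∧ ∀ x, ‖x‖ = 1 → ‖T x‖ ≤ M := by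
    rcases (Metric.sphere (0 : E) 1).eq_empty_or_nonempty with hempty | hne
    · refine ⟨0, le_rfl, hc, fun x hx ↦ ?_⟩
      exact (Set.eq_empty_iff_forall_notMem.mp hempty x (mem_sphere_zero_iff_norm.mpr hx)).elim
    · obtain ⟨x₀, hx₀, hmax⟩ :=
        (isCompact_sphere (0 : E) 1).exists_isMaxOn hne T.continuous.norm.continuousOn
      have hx₀1 : ‖x₀‖ = 1 := mem_sphere_zero_iff_norm.mp hx₀
      refine ⟨‖T x₀‖, norm_nonneg _, ?_, fun x hx ↦ hmax (mem_sphere_zero_iff_norm.mpr hx)⟩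
      simpa [hx₀1] using h x₀ (norm_ne_zero_iff.mp (hx₀1 ▸ one_ne_zero))
  exact (opNorm_le_of_unit_norm hM0 hM).trans_lt hMc

theorem ContinuousLinearMap.adjoint_apply_apply_of_norm_apply_eq {𝕜 H K : Type*} [RCLike 𝕜]
    [NormedAddCommGroup H] [InnerProductSpace 𝕜 H] [CompleteSpace H]
    [NormedAddCommGroup K] [InnerProductSpace 𝕜 K] [CompleteSpace K]
    (A : H →L[𝕜] K) {x : H} (h : ‖A x‖ = ‖A‖ * ‖x‖) :
    adjoint A (A x) = ((‖A‖ ^ 2 : ℝ) : 𝕜) • x := by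
  set c := ‖A‖ ^ 2
  have hNorm : ‖adjoint A (A x)‖ ≤ c * ‖x‖ := calc
    ‖adjoint A (A x)‖ ≤ ‖adjoint A‖ * ‖A x‖ := le_opNorm _ _
    _ = c * ‖x‖ := by rw [LinearIsometryEquiv.norm_map, h]; ring
  have hInner : RCLike.re (inner 𝕜 (adjoint A (A x)) ((c : 𝕜) • x)) = c * c * ‖x‖ ^ 2 := by
    rw [inner_smul_right, adjoint_inner_left, inner_self_eq_norm_sq_to_K, h]
    norm_cast
    ring
  have hSq : ‖adjoint A (A x) - (c : 𝕜) • x‖ ^ 2 ≤ 0 := by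
    rw [@norm_sub_sq 𝕜, hInner, norm_smul, RCLike.norm_ofReal, abs_of_nonneg (by positivity)]
    nlinarith [norm_nonneg (adjoint A (A x)), norm_nonneg x, sq_nonneg ‖A‖]
  exact sub_eq_zero.mp <| norm_eq_zero.mp <|
    (pow_eq_zero_iff two_ne_zero).mp (le_antisymm hSq (sq_nonneg _))

section SkewAdjoint

variable {E : Type*} [NormedAddCommGroup E] [InnerProductSpace ℝ E] [CompleteSpace E]
  {L : E →L[ℝ] E}

theorem norm_exp_smul_apply_of_mem_skewAdjoint (hL : L ∈ skewAdjoint (E →L[ℝ] E)) (t : ℝ)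
    (x : E) : ‖exp (t • L) x‖ = ‖x‖ := by
  -- `exp_mem_unitary_of_mem_skewAdjoint` needs a normed `ℚ`-algebra; operators only carry the
  -- `ℝ`-structure.
  let : NormedAlgebra ℚ (E →L[ℝ] E) := .restrictScalars ℚ ℝ _
  have hu : exp (t • L) ∈ unitary (E →L[ℝ] E) :=
    exp_mem_unitary_of_mem_skewAdjoint (skewAdjoint.smul_mem t hL)
  exact norm_map_of_mem_unitary hu x

theorem norm_exp_sub_one_apply_le_of_mem_skewAdjoint (hL : L ∈ skewAdjoint (E →L[ℝ] E))
    (x : E) : ‖(exp L - 1) x‖ ≤ ‖L x‖ := by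
  have hderiv (t : ℝ) : HasDerivAt (fun s : ℝ ↦ exp (s • L) x) (exp (t • L) (L x)) t := by
    simpa using (hasDerivAt_exp_smul_const L t).clm_apply (hasDerivAt_const t x)
  simpa using norm_image_sub_le_of_norm_deriv_le_segment_01'
    (fun t _ ↦ (hderiv t).hasDerivWithinAt)
    (fun t _ ↦ (norm_exp_smul_apply_of_mem_skewAdjoint hL t (L x)).le)

theorem inner_apply_self_eq_zero_of_mem_skewAdjoint (hL : L ∈ skewAdjoint (E →L[ℝ] E))
    (x : E) : ⟪L x, x⟫ = 0 := by
  have h : ⟪L x, x⟫ = -⟪L x, x⟫ := calc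
    ⟪L x, x⟫ = ⟪x, star L x⟫ := (adjoint_inner_right L x x).symm
    _ = -⟪L x, x⟫ := by
      rw [skewAdjoint.mem_iff.mp hL, _root_.neg_apply, inner_neg_right, real_inner_comm]
  linarith

theorem inner_exp_apply_self_eq_cos_of_mem_skewAdjoint (hL : L ∈ skewAdjoint (E →L[ℝ] E))
    {x : E} {a : ℝ} (hx : L (L x) = -(a ^ 2) • x) :
    ⟪exp L x, x⟫ = Real.cos a * ‖x‖ ^ 2 := by
  have hEven (k : ℕ) : (L ^ (2 * k)) x = (-(a ^ 2)) ^ k • x := by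
    induction k with
    | zero => simp
    | succ k ih =>
      rw [mul_add, mul_one, pow_add, mul_apply_eq_comp, sq L, mul_apply_eq_comp, hx, map_smul, ih,
        smul_smul, ← pow_succ']
  have hOdd (k : ℕ) : ⟪x, (L ^ (2 * k + 1)) x⟫ = 0 := by
    rw [pow_succ', mul_apply_eq_comp, hEven, map_smul, real_inner_smul_right, real_inner_comm,
      inner_apply_self_eq_zero_of_mem_skewAdjoint hL, mul_zero]
  have hSeries : HasSum (fun n ↦ (n.factorial : ℝ)⁻¹ * ⟪x, (L ^ n) x⟫) ⟪x, exp L x⟫ := by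
    simpa [real_inner_smul_right] using
      (exp_series_hasSum_exp' (𝕂 := ℝ) L).mapL ((innerSL ℝ x).comp (apply ℝ E x))
  have hCos : HasSum (fun n ↦ (n.factorial : ℝ)⁻¹ * ⟪x, (L ^ n) x⟫) (Real.cos a * ‖x‖ ^ 2) := by
    rw [← add_zero (Real.cos a * _)]
    refine HasSum.even_add_odd ?_ (hasSum_zero.congr_fun fun k ↦ by rw [hOdd, mul_zero])
    refine ((Real.hasSum_cos a).mul_right (‖x‖ ^ 2)).congr_fun fun k ↦ ?_
    rw [hEven, real_inner_smul_right, real_inner_self_eq_norm_sq, neg_pow, pow_mul]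
    ring
  rw [real_inner_comm, hSeries.unique hCos]

theorem norm_exp_sub_one_apply_lt_of_mem_skewAdjoint (hL : L ∈ skewAdjoint (E →L[ℝ] E))
    (hL0 : L ≠ 0) {x : E} (hx : x ≠ 0) : ‖(exp L - 1) x‖ < ‖L‖ * ‖x‖ := by
  rcases (L.le_opNorm x).lt_or_eq with hlt | heq
  · exact (norm_exp_sub_one_apply_le_of_mem_skewAdjoint hL x).trans_lt hlt
  set a := ‖L‖
  have ha : a ≠ 0 := norm_ne_zero_iff.mpr hL0
  have hLLx : L (L x) = -(a ^ 2) • x := by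
    have h := L.adjoint_apply_apply_of_norm_apply_eq heq
    rw [← star_eq_adjoint, skewAdjoint.mem_iff.mp hL, _root_.neg_apply, neg_eq_iff_eq_neg] at h
    rw [h, RCLike.ofReal_real_eq_id, id, neg_smul]
  have hexp : ‖exp L x‖ = ‖x‖ := by
    simpa using norm_exp_smul_apply_of_mem_skewAdjoint hL 1 x
  have hsq : ‖(exp L - 1) x‖ ^ 2 = 2 * (1 - Real.cos a) * ‖x‖ ^ 2 := by
    rw [_root_.sub_apply, one_apply_eq_self, norm_sub_sq_real, hexp,
      inner_exp_apply_self_eq_cos_of_mem_skewAdjoint hL hLLx]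
    ring
  have hcos : 2 * (1 - Real.cos a) < a ^ 2 := by
    linarith [Real.one_sub_sq_div_two_lt_cos ha]
  have hx' : 0 < ‖x‖ := norm_pos_iff.mpr hx
  refine lt_of_pow_lt_pow_left₀ 2 (by positivity) ?_
  rw [hsq, mul_pow]
  gcongr

theorem norm_exp_sub_one_lt_of_mem_skewAdjoint [FiniteDimensional ℝ E]
    (hL : L ∈ skewAdjoint (E →L[ℝ] E)) (hL0 : L ≠ 0) : ‖exp L - 1‖ < ‖L‖ :=
  (exp L - 1).opNorm_lt_of_forall_norm_apply_lt (norm_pos_iff.mpr hL0) fun _ hx ↦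
    norm_exp_sub_one_apply_lt_of_mem_skewAdjoint hL hL0 hx

end SkewAdjoint

theorem sNorm_eq_norm_toEuclideanCLM {n : Type*} [Fintype n] [DecidableEq n]
    (A : Matrix n n ℝ) : sNorm A = ‖toEuclideanCLM (𝕜 := ℝ) A‖ :=
  rfl

theorem Matrix.toEuclideanCLM_exp {n : Type*} [Fintype n] [DecidableEq n] (A : Matrix n n ℝ) :
    toEuclideanCLM (𝕜 := ℝ) (exp A) = exp (toEuclideanCLM (𝕜 := ℝ) A) := by
  have hcont : Continuous (toEuclideanCLM (𝕜 := ℝ) (n := n)).symm :=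
    LinearMap.continuous_of_finiteDimensional
      (toEuclideanCLM (𝕜 := ℝ) (n := n)).symm.toAlgEquiv.toLinearEquiv.toLinearMap
  have h := (exp_series_hasSum_exp' (𝕂 := ℝ) (toEuclideanCLM (𝕜 := ℝ) A)).map _ hcont
  simp only [Function.comp_def, map_smul, map_pow, StarAlgEquiv.symm_apply_apply] at h
  rw [congrFun (exp_eq_tsum ℝ) A, h.tsum_eq, StarAlgEquiv.apply_symm_apply]

theorem stmt_5_general (p : ℕ) (C : Matrix (Fin p) (Fin p) ℝ) (hC : Cᵀ = -C)
    (h0 : 0 < sNorm C) :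
    sNorm (NormedSpace.exp C - 1) < sNorm C := by
  have hskew : toEuclideanCLM (𝕜 := ℝ) C ∈ skewAdjoint _ := by
    rw [skewAdjoint.mem_iff, ← map_star, star_eq_conjTranspose,
      conjTranspose_eq_transpose_of_trivial, hC, map_neg]
  rw [sNorm_eq_norm_toEuclideanCLM] at h0 ⊢
  rw [sNorm_eq_norm_toEuclideanCLM, map_sub, map_one, toEuclideanCLM_exp]
  exact norm_exp_sub_one_lt_of_mem_skewAdjoint hskew (norm_pos_iff.mp h0)

/-- if `C` is skew-symmetric with `0 < ‖C‖₂ < π`, then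
`‖exp_m(C) − I‖₂ < ‖C‖₂`. -/
theorem stmt_5 (p : ℕ) (C : Matrix (Fin p) (Fin p) ℝ) (hC : Cᵀ = -C)
    (h0 : 0 < sNorm C) (hπ : sNorm C < Real.pi) :
    sNorm (NormedSpace.exp C - 1) < sNorm C :=
  stmt_5_general p C hC h0
end

section
/- Let V ∈ ℝ^{n×n} be orthogonal and let 0 < r < 1 be such that ‖V − I‖₂ < r. Then every complex eigenvalue λ of V satisfies |λ| = 1 and |arg(λ)| ≤ arctan( r·√(1 − r²/4) / (1 − r²/2) ) < r·√(1 − r²/4) / (1 − r²/2), where arg(λ) ∈ (−π, π] denotes the principal argument. -/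
/-! Over `ℂ`, `V` preserves `star v ⬝ᵥ v`, so its eigenvalues lie on the unit circle. Splitting a
complex vector into real and imaginary parts shows that the complexification of a real matrix
has the same spectral norm bound, so `λ - 1`, an eigenvalue of `V - I`, satisfies `|λ - 1| < r`.
A point of the unit circle at chord distance less than `r` from `1` has real part above
`1 - r²/2 = cos θ` and imaginary part at most `r√(1 - r²/4) = sin θ` in absolute value, where
`θ` is the angle subtending a chord of length `r`; hence `|arg λ| ≤ arctan (sin θ / cos θ)`. -/

open Matrix

section OperatorNorm

variable {m n : Type*} [Fintype n]

lemma re_map_ofReal_mulVec (A : Matrix m n ℝ) (v : n → ℂ) (i : m) :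
    ((A.map ((↑) : ℝ → ℂ) *ᵥ v) i).re = (A *ᵥ fun j => (v j).re) i := by
  simp [mulVec, dotProduct, Complex.re_sum]

lemma im_map_ofReal_mulVec (A : Matrix m n ℝ) (v : n → ℂ) (i : m) :
    ((A.map ((↑) : ℝ → ℂ) *ᵥ v) i).im = (A *ᵥ fun j => (v j).im) i := by
  simp [mulVec, dotProduct, Complex.im_sum]

variable [Fintype m] [DecidableEq n]

lemma sum_sq_mulVec_le_sNorm_sq_mul (A : Matrix m n ℝ) (x : n → ℝ) :
    ∑ i, (A *ᵥ x) i ^ 2 ≤ sNorm A ^ 2 * ∑ j, x j ^ 2 := by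
  have h := pow_le_pow_left₀ (norm_nonneg _)
    ((toEuclideanLin A).toContinuousLinearMap.le_opNorm (WithLp.toLp 2 x)) 2
  simpa [sNorm, mul_pow, EuclideanSpace.norm_sq_eq] using h

lemma sum_norm_sq_map_ofReal_mulVec_le (A : Matrix m n ℝ) (v : n → ℂ) :
    ∑ i, ‖(A.map ((↑) : ℝ → ℂ) *ᵥ v) i‖ ^ 2 ≤ sNorm A ^ 2 * ∑ j, ‖v j‖ ^ 2 := by
  have hre := sum_sq_mulVec_le_sNorm_sq_mul A fun j => (v j).re
  have him := sum_sq_mulVec_le_sNorm_sq_mul A fun j => (v j).im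
  simp only [Complex.sq_norm, Complex.normSq_apply, re_map_ofReal_mulVec,
    im_map_ofReal_mulVec, ← sq, Finset.sum_add_distrib]
  linarith

lemma norm_le_sNorm_of_map_ofReal_mulVec_eq_smul {A : Matrix n n ℝ} {μ : ℂ} {v : n → ℂ}
    (hv : v ≠ 0) (h : A.map ((↑) : ℝ → ℂ) *ᵥ v = μ • v) : ‖μ‖ ≤ sNorm A := by
  obtain ⟨i, hi⟩ := Function.ne_iff.mp hv
  have hpos : 0 < ∑ j, ‖v j‖ ^ 2 :=
    Finset.sum_pos' (fun j _ => by positivity)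
      ⟨i, Finset.mem_univ i, pow_pos (norm_pos_iff.mpr hi) 2⟩
  have hle := sum_norm_sq_map_ofReal_mulVec_le A v
  simp only [h, Pi.smul_apply, smul_eq_mul, norm_mul, mul_pow, ← Finset.mul_sum] at hle
  exact (pow_le_pow_iff_left₀ (norm_nonneg μ) (norm_nonneg _) two_ne_zero).mp
    (le_of_mul_le_mul_right hle hpos)

end OperatorNorm

open scoped ComplexOrder in
lemma norm_eq_one_of_mulVec_eq_smul {𝕜 n : Type*} [RCLike 𝕜] [Fintype n] [DecidableEq n]
    {M : Matrix n n 𝕜} (hM : Mᴴ * M = 1) {μ : 𝕜} {v : n → 𝕜} (hv : v ≠ 0)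
    (h : M *ᵥ v = μ • v) : ‖μ‖ = 1 := by
  have hvv : star v ⬝ᵥ v = (star μ * μ) * (star v ⬝ᵥ v) :=
    calc star v ⬝ᵥ v = star (M *ᵥ v) ⬝ᵥ (M *ᵥ v) := by
          rw [star_mulVec, dotProduct_mulVec, vecMul_vecMul, hM, vecMul_one]
      _ = (star μ * μ) * (star v ⬝ᵥ v) := by
          rw [h, star_smul, smul_dotProduct, dotProduct_smul, smul_eq_mul, smul_eq_mul,
            mul_assoc]
  have hμ : star μ * μ = 1 :=
    (mul_eq_right₀ (dotProduct_star_self_eq_zero.not.mpr hv)).mp hvv.symm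
  rw [RCLike.star_def, RCLike.conj_mul] at hμ
  exact (pow_eq_one_iff_of_nonneg (norm_nonneg μ) two_ne_zero).mp (by exact_mod_cast hμ)

lemma conjTranspose_map_ofReal_mul_self {n : Type*} [Fintype n] [DecidableEq n]
    {V : Matrix n n ℝ} (hV : Vᵀ * V = 1) :
    (V.map ((↑) : ℝ → ℂ))ᴴ * V.map ((↑) : ℝ → ℂ) = 1 := by
  have : (V.map ((↑) : ℝ → ℂ))ᴴ = Vᵀ.map ((↑) : ℝ → ℂ) := by
    ext i j; simp
  rw [this]
  change Complex.ofRealHom.mapMatrix Vᵀ * Complex.ofRealHom.mapMatrix V = 1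
  rw [← map_mul, hV, map_one]

namespace Real

lemma abs_arctan (x : ℝ) : |arctan x| = arctan |x| := by
  rcases le_total 0 x with h | h
  · rw [abs_of_nonneg h, abs_of_nonneg (arctan_nonneg.mpr h)]
  · rw [abs_of_nonpos h, abs_of_nonpos (arctan_le_zero.mpr h), arctan_neg]

lemma arctan_lt_self {x : ℝ} (hx : 0 < x) : arctan x < x := by
  rcases lt_or_ge x (π / 2) with h | h
  · calc arctan x < arctan (tan x) := arctan_strictMono (lt_tan hx h)
      _ = x := arctan_tan (by linarith [pi_pos]) h
  · exact (arctan_lt_pi_div_two x).trans_le h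

end Real

namespace Complex

lemma abs_arg_eq_arctan_of_re_pos {z : ℂ} (hz : 0 < z.re) :
    |z.arg| = Real.arctan (|z.im| / z.re) := by
  have hpi := abs_lt.mp (abs_arg_lt_pi_div_two_iff.mpr (Or.inl hz))
  rw [← abs_of_pos hz, ← abs_div, ← Real.abs_arctan, ← tan_arg,
    Real.arctan_tan hpi.1 hpi.2]

lemma abs_arg_le_of_norm_sub_one_lt {z : ℂ} {r : ℝ} (hr : r ^ 2 < 2) (hz : ‖z‖ = 1)
    (hzr : ‖z - 1‖ < r) :
    |z.arg| ≤ Real.arctan (r * √(1 - r ^ 2 / 4) / (1 - r ^ 2 / 2)) := by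
  have hr0 : 0 < r := (norm_nonneg _).trans_lt hzr
  have hunit : z.re ^ 2 + z.im ^ 2 = 1 := by
    rw [← one_pow 2, ← hz, Complex.sq_norm, normSq_apply]; ring
  have hchord : (z.re - 1) ^ 2 + z.im ^ 2 < r ^ 2 := by
    have := pow_lt_pow_left₀ hzr (norm_nonneg _) two_ne_zero
    rwa [Complex.sq_norm, normSq_apply, sub_re, sub_im, one_re, one_im, sub_zero, ← sq, ← sq]
      at this
  have hc : 0 < 1 - r ^ 2 / 2 := by linarith
  have hre : 1 - r ^ 2 / 2 < z.re := by nlinarith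
  have him : |z.im| ≤ r * √(1 - r ^ 2 / 4) := by
    calc |z.im| ≤ √(r ^ 2 * (1 - r ^ 2 / 4)) := Real.abs_le_sqrt (by nlinarith)
      _ = r * √(1 - r ^ 2 / 4) := by rw [Real.sqrt_mul (sq_nonneg r), Real.sqrt_sq hr0.le]
  rw [abs_arg_eq_arctan_of_re_pos (hc.trans hre)]
  exact Real.arctan_mono (div_le_div₀ (by positivity) him hc hre.le)

end Complex

/-- if `V` is orthogonal with `‖V − I‖₂ < r < 1`, then every complex
eigenvalue `λ` of `V` has modulus `1` and principal argument satisfying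
`|arg λ| ≤ arctan(r√(1−r²/4)/(1−r²/2)) < r√(1−r²/4)/(1−r²/2)`. -/
theorem stmt_6 (n : ℕ) (V : Matrix (Fin n) (Fin n) ℝ)
    (hV : Vᵀ * V = 1 ∧ V * Vᵀ = 1) (r : ℝ) (hr0 : 0 < r) (hr1 : r < 1)
    (hVnorm : sNorm (V - 1) < r) (lam : ℂ)
    (hlam : ∃ v : Fin n → ℂ, v ≠ 0 ∧ (V.map ((↑) : ℝ → ℂ)) *ᵥ v = lam • v) :
    ‖lam‖ = 1 ∧
    |lam.arg| ≤ Real.arctan (r * Real.sqrt (1 - r ^ 2 / 4) / (1 - r ^ 2 / 2)) ∧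
    Real.arctan (r * Real.sqrt (1 - r ^ 2 / 4) / (1 - r ^ 2 / 2)) <
      r * Real.sqrt (1 - r ^ 2 / 4) / (1 - r ^ 2 / 2) := by
  obtain ⟨v, hv, hvlam⟩ := hlam
  have hunit : ‖lam‖ = 1 :=
    norm_eq_one_of_mulVec_eq_smul (conjTranspose_map_ofReal_mul_self hV.1) hv hvlam
  have hsub : (V - 1).map ((↑) : ℝ → ℂ) *ᵥ v = (lam - 1) • v := by
    rw [Matrix.map_sub _ Complex.ofReal_sub,
      Matrix.map_one _ Complex.ofReal_zero Complex.ofReal_one, sub_mulVec, one_mulVec, hvlam,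
      sub_smul, one_smul]
  have hchord : ‖lam - 1‖ < r :=
    (norm_le_sNorm_of_map_ofReal_mulVec_eq_smul hv hsub).trans_lt hVnorm
  have hbound_pos : 0 < r * Real.sqrt (1 - r ^ 2 / 4) / (1 - r ^ 2 / 2) :=
    div_pos (mul_pos hr0 (Real.sqrt_pos.mpr (by nlinarith))) (by nlinarith)
  exact ⟨hunit, Complex.abs_arg_le_of_norm_sub_one_lt (by nlinarith) hunit hchord,
    Real.arctan_lt_self hbound_pos⟩
end

section
/- Let V ∈ ℝ^{n×n} be orthogonal and let 0 < r < 1 be such that ‖V − I‖₂ < r. Suppose L ∈ ℝ^{n×n} is skew-symmetric with exp_m(L) = V and ‖L‖₂ ≤ π. Then ‖L‖₂ < r·√(1 − r²/4) / (1 − r²/2). (That is, the principal matrix logarithm of V satisfies this norm bound.) -/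
/-!
Complexify `L`: it becomes a skew-adjoint element of the C⋆-algebra of complex matrices, with the
same operator norm. Its spectrum is purely imaginary and, `L` being normal, contains a point `iθ`
with `|θ| = ‖L‖`. Then `e^{iθ} - 1` lies in the spectrum of `V - 1`, so
`2 sin (‖L‖ / 2) = |e^{iθ} - 1| ≤ ‖V - 1‖ < r`. As `‖L‖ ≤ π`, this gives `‖L‖ < 2 arcsin (r / 2)`,
and `2 arcsin (r / 2) < tan (2 arcsin (r / 2))`, which is the stated bound.
-/

open Matrix

open WithLp Complex

namespace Real

theorem tan_two_mul_arcsin_half {r : ℝ} (h₁ : -2 ≤ r) (h₂ : r ≤ 2) :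
    tan (2 * arcsin (r / 2)) = r * √(1 - r ^ 2 / 4) / (1 - r ^ 2 / 2) := by
  have hsin : sin (arcsin (r / 2)) = r / 2 := sin_arcsin (by linarith) (by linarith)
  have hcos : cos (arcsin (r / 2)) = √(1 - r ^ 2 / 4) := by
    rw [cos_arcsin, div_pow]
    norm_num
  rw [tan_eq_sin_div_cos, sin_two_mul, cos_two_mul, hsin, hcos, sq_sqrt (by nlinarith)]
  ring

theorem lt_of_two_mul_sin_half_lt {r t : ℝ} (hr : r < 1) (ht₀ : 0 ≤ t) (ht : t ≤ π)
    (h : 2 * sin (t / 2) < r) : t < r * √(1 - r ^ 2 / 4) / (1 - r ^ 2 / 2) := by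
  have hsin₀ : 0 ≤ sin (t / 2) := sin_nonneg_of_nonneg_of_le_pi (by linarith) (by linarith)
  have ht_half : t / 2 < arcsin (r / 2) :=
    (lt_arcsin_iff_sin_lt ⟨by linarith [pi_pos], by linarith⟩ ⟨by linarith, by linarith⟩).2
      (by linarith)
  have hs : arcsin (r / 2) < π / 4 := by
    refine (arcsin_lt_iff_lt_sin ⟨by linarith, by linarith⟩
      ⟨by linarith [pi_pos], by linarith [pi_pos]⟩).2 ?_
    rw [sin_pi_div_four]
    linarith [one_lt_sqrt_two]
  calc t < 2 * arcsin (r / 2) := by linarith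
    _ < tan (2 * arcsin (r / 2)) := lt_tan (by linarith) (by linarith)
    _ = r * √(1 - r ^ 2 / 4) / (1 - r ^ 2 / 2) := tan_two_mul_arcsin_half (by linarith) (by linarith)

end Real

theorem two_mul_abs_sin_half_norm_le_norm_exp_sub_one {A : Type*} [CStarAlgebra A] {a : A}
    (ha : a ∈ skewAdjoint A) : 2 * |Real.sin (‖a‖ / 2)| ≤ ‖NormedSpace.exp a - 1‖ := by
  nontriviality A
  have hb : IsSelfAdjoint (-I • a) := by
    rw [skewAdjoint.mem_iff] at ha
    simp [IsSelfAdjoint, star_smul, ha]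
  obtain ⟨θ, hθσ, hθ⟩ := spectrum.exists_nnnorm_eq_spectralRadius (-I • a)
  obtain ⟨t, rfl⟩ : ∃ t : ℝ, θ = t := ⟨θ.re, hb.mem_spectrum_eq_re hθσ⟩
  have hnorm : ‖a‖ = |t| := by
    rw [hb.spectralRadius_eq_nnnorm, ENNReal.coe_inj] at hθ
    simpa [norm_smul] using congrArg NNReal.toReal hθ.symm
  have hta : I * t ∈ spectrum ℂ a := by
    simpa [smul_smul] using spectrum.smul_mem_smul_iff (r := Units.mk0 I I_ne_zero) |>.mpr hθσ
  have hexp : NormedSpace.exp (I * t) - 1 ∈ spectrum ℂ (NormedSpace.exp a - 1) := by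
    have hshift := spectrum.sub_singleton_eq (NormedSpace.exp a) (1 : ℂ)
    rw [map_one] at hshift
    exact hshift ▸ Set.sub_mem_sub (spectrum.exp_mem_exp a hta) (Set.mem_singleton 1)
  calc 2 * |Real.sin (‖a‖ / 2)| = ‖NormedSpace.exp (I * t) - 1‖ := by
        rw [← Complex.exp_eq_exp_ℂ, Complex.norm_exp_I_mul_ofReal_sub_one, hnorm]
        rcases abs_cases t with ⟨h, _⟩ | ⟨h, _⟩ <;> simp [h, neg_div]
    _ ≤ ‖NormedSpace.exp a - 1‖ := spectrum.norm_le_norm_of_mem hexp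

theorem EuclideanSpace.norm_sq_toLp_eq_re_add_im {n : Type*} [Fintype n] (z : n → ℂ) :
    ‖toLp 2 z‖ ^ 2 = ‖toLp 2 fun i => (z i).re‖ ^ 2 + ‖toLp 2 fun i => (z i).im‖ ^ 2 := by
  simp only [EuclideanSpace.norm_sq_eq, Complex.sq_norm, Complex.normSq_apply, Real.norm_eq_abs,
    sq_abs, ← Finset.sum_add_distrib]
  ring_nf

namespace Matrix

variable {m n : Type*} [Fintype n]

theorem re_map_ofReal_mulVec (M : Matrix m n ℝ) (z : n → ℂ) (i : m) :
    ((M.map ofReal *ᵥ z) i).re = (M *ᵥ fun j => (z j).re) i := by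
  simp [mulVec, dotProduct, Complex.re_sum]

theorem im_map_ofReal_mulVec (M : Matrix m n ℝ) (z : n → ℂ) (i : m) :
    ((M.map ofReal *ᵥ z) i).im = (M *ᵥ fun j => (z j).im) i := by
  simp [mulVec, dotProduct, Complex.im_sum]

theorem norm_sq_toLp_map_ofReal_mulVec [Fintype m] (M : Matrix m n ℝ) (z : n → ℂ) :
    ‖toLp 2 (M.map ofReal *ᵥ z)‖ ^ 2 =
      ‖toLp 2 (M *ᵥ fun j => (z j).re)‖ ^ 2 + ‖toLp 2 (M *ᵥ fun j => (z j).im)‖ ^ 2 := by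
  simp only [EuclideanSpace.norm_sq_toLp_eq_re_add_im, re_map_ofReal_mulVec,
    im_map_ofReal_mulVec]

section L2OpNorm

open scoped Matrix.Norms.L2Operator

variable [DecidableEq n]

theorem l2_opNorm_map_ofReal [Fintype m] (M : Matrix m n ℝ) : ‖M.map ofReal‖ = ‖M‖ := by
  apply le_antisymm
  · refine ContinuousLinearMap.opNorm_le_bound _ (norm_nonneg M) fun z => ?_
    have hM (x : n → ℝ) : ‖toLp 2 (M *ᵥ x)‖ ≤ ‖M‖ * ‖toLp 2 x‖ := M.l2_opNorm_mulVec (toLp 2 x)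
    have hz := EuclideanSpace.norm_sq_toLp_eq_re_add_im z.ofLp
    rw [toLp_ofLp] at hz
    rw [← pow_le_pow_iff_left₀ (norm_nonneg _) (by positivity) two_ne_zero]
    change ‖toLp 2 (M.map ofReal *ᵥ z.ofLp)‖ ^ 2 ≤ _
    rw [norm_sq_toLp_map_ofReal_mulVec, mul_pow, hz, mul_add, ← mul_pow, ← mul_pow]
    gcongr <;> exact hM _
  · refine ContinuousLinearMap.opNorm_le_bound _ (norm_nonneg _) fun v => ?_
    set z : n → ℂ := fun j => (v j : ℂ)
    have hMv := M.norm_sq_toLp_map_ofReal_mulVec z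
    have hv := EuclideanSpace.norm_sq_toLp_eq_re_add_im z
    simp only [z, ofReal_re, ofReal_im, ← Pi.zero_def, mulVec_zero, toLp_zero, norm_zero,
      toLp_ofLp, zero_pow two_ne_zero, add_zero] at hMv hv
    rw [← pow_le_pow_iff_left₀ (norm_nonneg _) (by positivity) two_ne_zero]
    change ‖toLp 2 (M *ᵥ v.ofLp)‖ ^ 2 ≤ _
    rw [← hMv, mul_pow, ← hv, ← mul_pow]
    gcongr
    exact (M.map ofReal).l2_opNorm_mulVec (toLp 2 z)

theorem exp_map_ofReal (A : Matrix n n ℝ) :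
    NormedSpace.exp (A.map ofReal) = (NormedSpace.exp A).map ofReal := by
  let : NormedAlgebra ℚ (Matrix n n ℝ) := .restrictScalars ℚ ℝ _
  exact (NormedSpace.map_exp ofRealHom.mapMatrix (continuous_id.matrix_map continuous_ofReal) A).symm

theorem two_mul_abs_sin_half_l2_opNorm_le {L : Matrix n n ℝ} (hL : Lᵀ = -L) :
    2 * |Real.sin (‖L‖ / 2)| ≤ ‖NormedSpace.exp L - 1‖ := by
  have hskew : L.map ofReal ∈ skewAdjoint (Matrix n n ℂ) := by
    rw [skewAdjoint.mem_iff, star_eq_conjTranspose]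
    ext i j
    simpa using congr_arg ofReal (congrFun₂ hL i j)
  have h := two_mul_abs_sin_half_norm_le_norm_exp_sub_one hskew
  rwa [exp_map_ofReal, ← Matrix.map_one _ ofReal_zero ofReal_one, ← Matrix.map_sub _ ofReal_sub,
    l2_opNorm_map_ofReal, l2_opNorm_map_ofReal] at h

end L2OpNorm

end Matrix

open scoped Matrix.Norms.L2Operator in
theorem sNorm_eq_l2_opNorm {m n : Type*} [Fintype m] [Fintype n] [DecidableEq n]
    (A : Matrix m n ℝ) : sNorm A = ‖A‖ := rfl

theorem stmt_7_general (n : ℕ) (V : Matrix (Fin n) (Fin n) ℝ)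
    (r : ℝ) (hr1 : r < 1)
    (hVnorm : sNorm (V - 1) < r)
    (L : Matrix (Fin n) (Fin n) ℝ) (hLskew : Lᵀ = -L)
    (hLexp : NormedSpace.exp L = V) (hLnorm : sNorm L ≤ Real.pi) :
    sNorm L < r * Real.sqrt (1 - r ^ 2 / 4) / (1 - r ^ 2 / 2) := by
  have hsin := Matrix.two_mul_abs_sin_half_l2_opNorm_le hLskew
  rw [hLexp, ← sNorm_eq_l2_opNorm, ← sNorm_eq_l2_opNorm] at hsin
  refine Real.lt_of_two_mul_sin_half_lt hr1 (norm_nonneg _) hLnorm ?_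
  linarith [le_abs_self (Real.sin (sNorm L / 2))]

/-- if `V` is orthogonal with `‖V − I‖₂ < r < 1` and `L` is the principal
matrix logarithm of `V` (skew-symmetric, `exp_m(L) = V`, `‖L‖₂ ≤ π`), then
`‖L‖₂ < r√(1−r²/4)/(1−r²/2)`. -/
theorem stmt_7 (n : ℕ) (V : Matrix (Fin n) (Fin n) ℝ)
    (hV : Vᵀ * V = 1 ∧ V * Vᵀ = 1) (r : ℝ) (hr0 : 0 < r) (hr1 : r < 1)
    (hVnorm : sNorm (V - 1) < r)
    (L : Matrix (Fin n) (Fin n) ℝ) (hLskew : Lᵀ = -L)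
    (hLexp : NormedSpace.exp L = V) (hLnorm : sNorm L ≤ Real.pi) :
    sNorm L < r * Real.sqrt (1 - r ^ 2 / 4) / (1 - r ^ 2 / 2) :=
  stmt_7_general n V r hr1 hVnorm L hLskew hLexp hLnorm
end

section
/- Let R ∈ ℝ^{p×p} and let R = Φ Σ Dᵀ be a singular value decomposition, where Φ, D ∈ ℝ^{p×p} are orthogonal and Σ is diagonal with nonnegative entries. Then the matrix exponential of the skew-symmetric block matrix [[0, −Rᵀ],[R, 0]] ∈ ℝ^{2p×2p} is exp_m([[0, −Rᵀ],[R, 0]]) = [[D, 0],[0, Φ]] · [[cos(Σ), −sin(Σ)],[sin(Σ), cos(Σ)]] · [[Dᵀ, 0],[0, Φᵀ]] = [[D cos(Σ) Dᵀ, −D sin(Σ) Φᵀ],[Φ sin(Σ) Dᵀ, Φ cos(Σ) Φᵀ]], where cos and sin are applied entrywise to the diagonal entries of Σ. -/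
/-!
Conjugating by the orthogonal matrix `[[D, 0], [0, Φ]]` reduces the claim to `R = Σ` diagonal.
The block matrix `[[diag a, -diag b], [diag b, diag a]]` is the real form of multiplication by
`a + b i` on `ℂⁿ ≅ ℝⁿ ⊕ ℝⁿ`, coordinatewise; this is an `ℝ`-algebra hom out of `n → ℂ`, so it
commutes with `exp`, and `exp (i σ) = cos σ + i sin σ` gives the rotation blocks.
-/

open Matrix NormedSpace

namespace Matrix

variable {l m n o : Type*}

theorem fromBlocks_diagonal_mul_mul {α : Type*} [Semiring α] [Fintype l] [Fintype m]
    [Fintype n] [Fintype o] (D : Matrix l l α) (Φ : Matrix m m α) (A : Matrix l n α)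
    (B : Matrix l o α) (C : Matrix m n α) (E : Matrix m o α) (D' : Matrix n n α)
    (Φ' : Matrix o o α) :
    fromBlocks D 0 0 Φ * fromBlocks A B C E * fromBlocks D' 0 0 Φ' =
      fromBlocks (D * A * D') (D * B * Φ') (Φ * C * D') (Φ * E * Φ') := by
  rw [fromBlocks_multiply, fromBlocks_multiply]
  simp only [Matrix.mul_zero, Matrix.zero_mul, add_zero, zero_add]

theorem exp_conj_of_mul_transpose_eq_one {α : Type*} [NormedCommRing α] [NormedAlgebra ℚ α]
    [CompleteSpace α] [Fintype m] [DecidableEq m] {U : Matrix m m α} (hU : U * Uᵀ = 1)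
    (A : Matrix m m α) : exp (U * A * Uᵀ) = U * exp A * Uᵀ := by
  have hUunit : IsUnit U := (isUnit_iff_isUnit_det U).mpr (isUnit_det_of_right_inverse hU)
  simpa only [inv_eq_right_inv hU] using exp_conj U A hUunit

variable (n) [Fintype n] [DecidableEq n]

noncomputable def complexDiagonalRealBlocks : (n → ℂ) →ₐ[ℝ] Matrix (n ⊕ n) (n ⊕ n) ℝ where
  toFun z := fromBlocks (diagonal fun i => (z i).re) (-diagonal fun i => (z i).im)
    (diagonal fun i => (z i).im) (diagonal fun i => (z i).re)
  map_one' := by simp [← fromBlocks_one]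
  map_mul' z w := by
    ext (i | i) (j | j) <;> by_cases h : i = j <;>
      simp [fromBlocks_multiply, h] <;> ring
  map_zero' := by simp
  map_add' z w := by
    simp only [Pi.add_apply, Complex.add_re, Complex.add_im, ← diagonal_add, fromBlocks_add,
      neg_add]
  commutes' r := by
    ext (i | i) (j | j) <;> simp [algebraMap_matrix_apply, diagonal_apply]

variable {n}

theorem complexDiagonalRealBlocks_apply (z : n → ℂ) :
    complexDiagonalRealBlocks n z = fromBlocks (diagonal fun i => (z i).re)
      (-diagonal fun i => (z i).im) (diagonal fun i => (z i).im)
      (diagonal fun i => (z i).re) := rfl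

theorem exp_fromBlocks_zero_neg_diagonal_diagonal_zero (σ : n → ℝ) :
    exp (fromBlocks 0 (-diagonal σ) (diagonal σ) 0) =
      fromBlocks (diagonal fun i => Real.cos (σ i)) (-diagonal fun i => Real.sin (σ i))
        (diagonal fun i => Real.sin (σ i)) (diagonal fun i => Real.cos (σ i)) := by
  -- `map_exp` needs a normed algebra; any norm on the matrices will do.
  let : NormedRing (Matrix (n ⊕ n) (n ⊕ n) ℝ) := Matrix.linftyOpNormedRing
  let : NormedAlgebra ℝ (Matrix (n ⊕ n) (n ⊕ n) ℝ) := Matrix.linftyOpNormedAlgebra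
  have hblocks : complexDiagonalRealBlocks n (fun i => σ i * Complex.I) =
      fromBlocks 0 (-diagonal σ) (diagonal σ) 0 := by
    simp [complexDiagonalRealBlocks_apply]
  rw [← hblocks]
  refine (map_exp (complexDiagonalRealBlocks n)
    (complexDiagonalRealBlocks n).toLinearMap.continuous_of_finiteDimensional _).symm.trans ?_
  rw [Pi.exp_def, complexDiagonalRealBlocks_apply]
  simp [← Complex.exp_eq_exp_ℂ, Complex.exp_ofReal_mul_I_re, Complex.exp_ofReal_mul_I_im]

end Matrix

theorem stmt_14_general (p : ℕ) (R Φ D : Matrix (Fin p) (Fin p) ℝ) (σ : Fin p → ℝ)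
    (hΦ : Φᵀ * Φ = 1 ∧ Φ * Φᵀ = 1) (hD : Dᵀ * D = 1 ∧ D * Dᵀ = 1)
    (hR : R = Φ * Matrix.diagonal σ * Dᵀ) :
    NormedSpace.exp (Matrix.fromBlocks 0 (-Rᵀ) R 0) =
      Matrix.fromBlocks D 0 0 Φ *
        Matrix.fromBlocks (Matrix.diagonal fun i => Real.cos (σ i))
          (-(Matrix.diagonal fun i => Real.sin (σ i)))
          (Matrix.diagonal fun i => Real.sin (σ i))
          (Matrix.diagonal fun i => Real.cos (σ i)) *
        Matrix.fromBlocks Dᵀ 0 0 Φᵀ ∧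
    NormedSpace.exp (Matrix.fromBlocks 0 (-Rᵀ) R 0) =
      Matrix.fromBlocks (D * (Matrix.diagonal fun i => Real.cos (σ i)) * Dᵀ)
        (-(D * (Matrix.diagonal fun i => Real.sin (σ i)) * Φᵀ))
        (Φ * (Matrix.diagonal fun i => Real.sin (σ i)) * Dᵀ)
        (Φ * (Matrix.diagonal fun i => Real.cos (σ i)) * Φᵀ) := by
  set U := fromBlocks D 0 0 Φ
  have hUt : Uᵀ = fromBlocks Dᵀ 0 0 Φᵀ := by simp [U, fromBlocks_transpose]
  have hU : U * Uᵀ = 1 := by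
    simp [hUt, U, fromBlocks_multiply, hD.2, hΦ.2, ← fromBlocks_one]
  have hconj : fromBlocks 0 (-Rᵀ) R 0 = U * fromBlocks 0 (-diagonal σ) (diagonal σ) 0 * Uᵀ := by
    rw [hUt, fromBlocks_diagonal_mul_mul, hR]
    simp [transpose_mul, Matrix.mul_assoc, -diagonal_neg]
  have hexp := exp_conj_of_mul_transpose_eq_one hU (fromBlocks 0 (-diagonal σ) (diagonal σ) 0)
  rw [← hconj, exp_fromBlocks_zero_neg_diagonal_diagonal_zero, hUt] at hexp
  refine ⟨hexp, hexp.trans ?_⟩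
  rw [fromBlocks_diagonal_mul_mul]
  simp [-diagonal_neg]

/-- for `R = Φ Σ Dᵀ` a singular value decomposition (`Φ, D` orthogonal,
`Σ = diagonal σ` with `σ ≥ 0`), the matrix exponential of `[[0, −Rᵀ],[R, 0]]` equals
`[[D,0],[0,Φ]]·[[cos Σ, −sin Σ],[sin Σ, cos Σ]]·[[Dᵀ,0],[0,Φᵀ]]`, which equals
`[[D cos(Σ) Dᵀ, −D sin(Σ) Φᵀ],[Φ sin(Σ) Dᵀ, Φ cos(Σ) Φᵀ]]`. -/
theorem stmt_14 (p : ℕ) (R Φ D : Matrix (Fin p) (Fin p) ℝ) (σ : Fin p → ℝ)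
    (hΦ : Φᵀ * Φ = 1 ∧ Φ * Φᵀ = 1) (hD : Dᵀ * D = 1 ∧ D * Dᵀ = 1)
    (hσ : ∀ i, 0 ≤ σ i)
    (hR : R = Φ * Matrix.diagonal σ * Dᵀ) :
    NormedSpace.exp (Matrix.fromBlocks 0 (-Rᵀ) R 0) =
      Matrix.fromBlocks D 0 0 Φ *
        Matrix.fromBlocks (Matrix.diagonal fun i => Real.cos (σ i))
          (-(Matrix.diagonal fun i => Real.sin (σ i)))
          (Matrix.diagonal fun i => Real.sin (σ i))
          (Matrix.diagonal fun i => Real.cos (σ i)) *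
        Matrix.fromBlocks Dᵀ 0 0 Φᵀ ∧
    NormedSpace.exp (Matrix.fromBlocks 0 (-Rᵀ) R 0) =
      Matrix.fromBlocks (D * (Matrix.diagonal fun i => Real.cos (σ i)) * Dᵀ)
        (-(D * (Matrix.diagonal fun i => Real.sin (σ i)) * Φᵀ))
        (Φ * (Matrix.diagonal fun i => Real.sin (σ i)) * Dᵀ)
        (Φ * (Matrix.diagonal fun i => Real.cos (σ i)) * Φᵀ) :=
  stmt_14_general p R Φ D σ hΦ hD hR
end

section
/- Let n ≥ p ≥ 1 and let U₀, Q̂, Ũ ∈ ℝ^{n×p} with U₀ᵀU₀ = I_p. Set M := U₀ᵀŨ and assume M is invertible. Suppose (I_n − U₀U₀ᵀ)Ũ = Q̂ S Dᵀ M, where D ∈ ℝ^{p×p} is orthogonal and S = diag(s₁,…,s_p) is diagonal with nonnegative entries, and set Σ := diag(arctan s₁, …, arctan s_p). Then U₀ D cos(Σ) Dᵀ + Q̂ sin(Σ) Dᵀ = Ũ M^{−1} D cos(Σ) Dᵀ. (Hence the output of the Grassmann exponential formula applied to the tangent vector Δ = Q̂ Σ Dᵀ = Q̂ arctan(S) Dᵀ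 has the same column span as Ũ, which establishes the closed-form Grassmann logarithm.) -/
open Matrix

/-- the closed-form Grassmann logarithm. With `M = U₀ᵀŨ` invertible and
`(I − U₀U₀ᵀ)Ũ = Q̂ S Dᵀ M` (`D` orthogonal, `S = diagonal s`, `s ≥ 0`), setting
`Σ = arctan(S)` entrywise, one has
`U₀ D cos(Σ) Dᵀ + Q̂ sin(Σ) Dᵀ = Ũ M⁻¹ D cos(Σ) Dᵀ`. -/
theorem stmt_15 (n p : ℕ) (hp : 1 ≤ p) (hnp : p ≤ n)
    (U₀ Qh Ut : Matrix (Fin n) (Fin p) ℝ) (hU₀ : U₀ᵀ * U₀ = 1)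
    (M : Matrix (Fin p) (Fin p) ℝ) (hM : M = U₀ᵀ * Ut) (hMinv : IsUnit M.det)
    (D : Matrix (Fin p) (Fin p) ℝ) (hD : Dᵀ * D = 1 ∧ D * Dᵀ = 1)
    (s : Fin p → ℝ) (hs : ∀ i, 0 ≤ s i)
    (hdecomp : (1 - U₀ * U₀ᵀ) * Ut = Qh * Matrix.diagonal s * Dᵀ * M) :
    U₀ * D * (Matrix.diagonal fun i => Real.cos (Real.arctan (s i))) * Dᵀ +
        Qh * (Matrix.diagonal fun i => Real.sin (Real.arctan (s i))) * Dᵀ =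
      Ut * M⁻¹ * D * (Matrix.diagonal fun i => Real.cos (Real.arctan (s i))) * Dᵀ := by
  have h2 : Ut - U₀ * M = Qh * Matrix.diagonal s * Dᵀ * M := by
    have h := hdecomp
    rw [Matrix.sub_mul, Matrix.one_mul, Matrix.mul_assoc, ← hM] at h
    exact h
  have hUt : Ut = U₀ * M + Qh * Matrix.diagonal s * Dᵀ * M := by
    rw [sub_eq_iff_eq_add.mp h2, add_comm]
  have hInv : M * M⁻¹ = 1 := Matrix.mul_nonsing_inv M hMinv
  have hUtM : Ut * M⁻¹ = U₀ + Qh * Matrix.diagonal s * Dᵀ := by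
    rw [hUt, Matrix.add_mul, Matrix.mul_assoc U₀, hInv, Matrix.mul_one,
      Matrix.mul_assoc _ M, hInv, Matrix.mul_one]
  rw [hUtM]
  have hsin : (Matrix.diagonal fun i => Real.sin (Real.arctan (s i))) =
      Matrix.diagonal s * (Matrix.diagonal fun i => Real.cos (Real.arctan (s i))) := by
    rw [Matrix.diagonal_mul_diagonal]
    ext i j
    by_cases h : i = j
    · subst h
      rw [Matrix.diagonal_apply_eq, Matrix.diagonal_apply_eq, Real.sin_arctan,
        Real.cos_arctan]
      ring
    · rw [Matrix.diagonal_apply_ne _ h, Matrix.diagonal_apply_ne _ h]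
  rw [hsin]
  have hcancel : ∀ X : Matrix (Fin p) (Fin p) ℝ, Dᵀ * (D * X) = X := fun X => by
    rw [← Matrix.mul_assoc, hD.1, Matrix.one_mul]
  simp [Matrix.add_mul, Matrix.mul_assoc, hcancel]
end
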